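/- Let μ be a σ-finite Radon measure on ℝ² with no atoms. Then there exists θ_0 ∈ [0, π) such that every line in direction θ_0 and every line in direction θ_0 + π/2 has μ-measure zero. -/

import Mathlib

/-!
Two lines with different directions in `[0, π)` meet in at most one point, so for an atomless
measure they are almost disjoint. A σ-finite measure gives positive mass to at most countably many
members of an almost disjoint family; hence only countably many directions carry a line of positive
measure, and some `θ₀ ∈ (0, π/2)` avoids both these directions and their translates by `-π/2`.
-/

open MeasureTheory Set Real

/-- The line through `p` in the direction `(cos θ, sin θ)`. -/
def lineDir (θ : ℝ) (p : ℝ × ℝ) : Set (ℝ × ℝ) :=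
  {x | ∃ t : ℝ, x = p + t • ((Real.cos θ, Real.sin θ) : ℝ × ℝ)}

open Function

lemma lineDir_eq_setOf (θ : ℝ) (p : ℝ × ℝ) :
    lineDir θ p = {x : ℝ × ℝ | sin θ * (x.1 - p.1) = cos θ * (x.2 - p.2)} := by
  ext x
  simp only [lineDir, mem_ofPred_eq]
  constructor
  · rintro ⟨t, rfl⟩
    simp only [Prod.fst_add, Prod.snd_add, Prod.smul_mk, smul_eq_mul]
    ring
  · intro hx
    have hpyth := sin_sq_add_cos_sq θ
    -- the parameter of `x` is its coordinate along the unit vector `(cos θ, sin θ)`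
    refine ⟨cos θ * (x.1 - p.1) + sin θ * (x.2 - p.2), Prod.ext ?_ ?_⟩
    · simp only [Prod.fst_add, Prod.smul_mk, smul_eq_mul]
      linear_combination (-(x.1 - p.1)) * hpyth + sin θ * hx
    · simp only [Prod.snd_add, Prod.smul_mk, smul_eq_mul]
      linear_combination (-(x.2 - p.2)) * hpyth - cos θ * hx

lemma isClosed_lineDir (θ : ℝ) (p : ℝ × ℝ) : IsClosed (lineDir θ p) := by
  rw [lineDir_eq_setOf]
  exact isClosed_eq (by fun_prop) (by fun_prop)

lemma sin_sub_ne_zero_of_mem_Ico {θ₁ θ₂ : ℝ} (h₁ : θ₁ ∈ Ico 0 π) (h₂ : θ₂ ∈ Ico 0 π)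
    (hne : θ₁ ≠ θ₂) : sin (θ₁ - θ₂) ≠ 0 := by
  rcases hne.lt_or_gt with hlt | hgt
  · rw [← neg_sub, sin_neg, neg_ne_zero]
    exact (sin_pos_of_pos_of_lt_pi (by linarith) (by linarith [h₁.1, h₂.2])).ne'
  · exact (sin_pos_of_pos_of_lt_pi (by linarith) (by linarith [h₂.1, h₁.2])).ne'

lemma lineDir_inter_subsingleton {θ₁ θ₂ : ℝ} (hsin : sin (θ₁ - θ₂) ≠ 0) (p q : ℝ × ℝ) :
    (lineDir θ₁ p ∩ lineDir θ₂ q).Subsingleton := by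
  rintro _ ⟨⟨t, rfl⟩, hx⟩ _ ⟨⟨s, rfl⟩, hy⟩
  rw [lineDir_eq_setOf] at hx hy
  simp only [mem_ofPred_eq, Prod.fst_add, Prod.snd_add, Prod.smul_mk, smul_eq_mul] at hx hy
  have hts : (t - s) * sin (θ₁ - θ₂) = 0 := by
    rw [sin_sub]
    linear_combination hy - hx
  rw [sub_eq_zero.mp ((mul_eq_zero.mp hts).resolve_right hsin)]

theorem countable_setOf_measure_lineDir_ne_zero (μ : Measure (ℝ × ℝ)) [SFinite μ]
    [NullSingletonClass μ] :
    {θ ∈ Ico 0 π | ∃ p, μ (lineDir θ p) ≠ 0}.Countable := by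
  set B := {θ ∈ Ico 0 π | ∃ p, μ (lineDir θ p) ≠ 0}
  let heavyLine (θ : B) : Set (ℝ × ℝ) := lineDir θ θ.2.2.choose
  have hdisj : Pairwise (AEDisjoint μ on heavyLine) := fun θ₁ θ₂ hne =>
    (lineDir_inter_subsingleton
      (sin_sub_ne_zero_of_mem_Ico θ₁.2.1 θ₂.2.1 (Subtype.coe_ne_coe.mpr hne)) _ _).measure_zero μ
  have hcount := Measure.countable_meas_pos_of_disjoint_iUnion₀
    (fun θ => (isClosed_lineDir _ _).measurableSet.nullMeasurableSet) hdisj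
  have hall : {θ : B | 0 < μ (heavyLine θ)} = univ :=
    eq_univ_of_forall fun θ => pos_iff_ne_zero.mpr θ.2.2.choose_spec
  rw [hall, countable_univ_iff] at hcount
  exact countable_coe_iff.mp hcount

theorem exists_null_perpendicular_directions_general (μ : Measure (ℝ × ℝ)) [SigmaFinite μ]
    (hna : ∀ x : ℝ × ℝ, μ {x} = 0) :
    ∃ θ₀ ∈ Set.Ico 0 π,
      (∀ p : ℝ × ℝ, μ (lineDir θ₀ p) = 0) ∧
        ∀ p : ℝ × ℝ, μ (lineDir (θ₀ + π / 2) p) = 0 := by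
  have : NullSingletonClass μ := ⟨hna⟩
  set B := {θ ∈ Ico 0 π | ∃ p, μ (lineDir θ p) ≠ 0}
  have hB : B.Countable := countable_setOf_measure_lineDir_ne_zero μ
  have hnull : ∀ θ ∈ Ico 0 π, θ ∉ B → ∀ p, μ (lineDir θ p) = 0 := fun θ hθ hθB p =>
    by_contra fun hp => hθB ⟨hθ, p, hp⟩
  obtain ⟨θ₀, hθ₀B, hθ₀⟩ := ((hB.union (hB.preimage (add_left_injective (π / 2)))).dense_compl
    ℝ).exists_mem_open isOpen_Ioo (nonempty_Ioo.mpr (by positivity : (0 : ℝ) < π / 2))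
  rw [mem_compl_iff, mem_union, not_or, mem_preimage] at hθ₀B
  have hθ₀_mem : θ₀ ∈ Ico 0 π := ⟨hθ₀.1.le, by linarith [hθ₀.2, pi_pos]⟩
  have hθ₀_perp_mem : θ₀ + π / 2 ∈ Ico 0 π := ⟨by linarith [hθ₀.1, pi_pos], by linarith [hθ₀.2]⟩
  exact ⟨θ₀, hθ₀_mem, hnull θ₀ hθ₀_mem hθ₀B.1, hnull _ hθ₀_perp_mem hθ₀B.2⟩

/-- For a σ-finite Radon measure `μ` on `ℝ²` (finite on compacts) without atoms,
there is a direction `θ_0 ∈ [0, π)` such that every line in direction `θ_0` and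
every line in the perpendicular direction `θ_0 + π/2` has `μ`-measure zero. -/
theorem exists_null_perpendicular_directions (μ : Measure (ℝ × ℝ)) [SigmaFinite μ]
    [IsFiniteMeasureOnCompacts μ] (hna : ∀ x : ℝ × ℝ, μ {x} = 0) :
    ∃ θ₀ ∈ Set.Ico 0 π,
      (∀ p : ℝ × ℝ, μ (lineDir θ₀ p) = 0) ∧
        ∀ p : ℝ × ℝ, μ (lineDir (θ₀ + π / 2) p) = 0 :=
  exists_null_perpendicular_directions_general μ hna
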